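/- arXiv:1510.07296 — 2 statements merged into one kernel-verified Lean document; each statement's English description precedes it below -/
import Mathlib

section
/- Consider the system v'(t) ≥ -(ω₅ + 1/ω₈) v(t), v(0) = v₀ > 0, and r'(t) = (ω₁₀ - ω₁₁/(v(t) + ω₁₂)) r(t)², r(0) = r₀ > 0, with positive parameters ω₅, ω₈, ω₁₀, ω₁₁, ω₁₂ and δ₁ ∈ (0, ω₁₀) such that M := ω₁₁/(ω₁₀ - δ₁) - ω₁₂ > 0. If r₀ · ln(v₀/M) > (ω₅ + 1/ω₈)/δ₁ (in particular v₀ > M), then r blows up in finite time: there exists T* ≤ 1/(δ₁ r₀) such that r(t) → ∞ as t → T*⁻. -/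
/-!
The lower bound `v' ≥ -c v` makes `v t * exp (c t)` nondecreasing, so `v t ≥ v₀ e^{-c t}`, which
stays above `M` until time `log (v₀ / M) / c`. While `v > M` the coefficient of `r²` is at least
`δ₁`, so `r` is increasing and `1 / r + δ₁ t` is nonincreasing; hence `δ₁ t < 1 / r₀` as long as
`r` exists. The hypothesis on `r₀ log (v₀ / M)` says exactly that `1 / (δ₁ r₀)` comes before
`v` can reach `M`.
-/

open Real Set

theorem Convex.monotoneOn_of_hasDerivAt_nonneg {D : Set ℝ} (hD : Convex ℝ D) {f f' : ℝ → ℝ}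
    (hf : ∀ x ∈ D, HasDerivAt f (f' x) x) (hf' : ∀ x ∈ interior D, 0 ≤ f' x) :
    MonotoneOn f D :=
  monotoneOn_of_hasDerivWithinAt_nonneg hD
    (fun x hx => (hf x hx).continuousAt.continuousWithinAt)
    (fun x hx => (hf x (interior_subset hx)).hasDerivWithinAt) hf'

theorem Convex.antitoneOn_of_hasDerivAt_nonpos {D : Set ℝ} (hD : Convex ℝ D) {f f' : ℝ → ℝ}
    (hf : ∀ x ∈ D, HasDerivAt f (f' x) x) (hf' : ∀ x ∈ interior D, f' x ≤ 0) :
    AntitoneOn f D :=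
  antitoneOn_of_hasDerivWithinAt_nonpos hD
    (fun x hx => (hf x hx).continuousAt.continuousWithinAt)
    (fun x hx => (hf x (interior_subset hx)).hasDerivWithinAt) hf'

theorem mul_exp_neg_le_of_hasDerivAt_ge {v v' : ℝ → ℝ} {c : ℝ}
    (hv : ∀ t ≥ 0, HasDerivAt v (v' t) t) (hv' : ∀ t ≥ 0, -c * v t ≤ v' t) :
    ∀ t ≥ 0, v 0 * exp (-(c * t)) ≤ v t := by
  have hderiv : ∀ t ∈ Ici (0 : ℝ),
      HasDerivAt (fun t => v t * exp (c * t)) (exp (c * t) * (v' t + c * v t)) t := by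
    intro t ht
    exact ((hv t ht).mul ((hasDerivAt_id' t).const_mul c).exp).congr_deriv (by ring)
  have hmono : MonotoneOn (fun t => v t * exp (c * t)) (Ici 0) :=
    (convex_Ici 0).monotoneOn_of_hasDerivAt_nonneg hderiv fun t ht =>
      mul_nonneg (exp_pos _).le (by linarith [hv' t (interior_subset ht)])
  intro t ht
  calc v 0 * exp (-(c * t)) ≤ v t * exp (c * t) * exp (-(c * t)) := by
        gcongr
        simpa using hmono self_mem_Ici ht ht
    _ = v t := by rw [mul_assoc, ← exp_add, add_neg_cancel, exp_zero, mul_one]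

theorem le_sub_div_of_div_sub_lt {a b c δ v : ℝ} (hδ : δ < a) (hpos : 0 < b / (a - δ))
    (hv : b / (a - δ) < v + c) : δ ≤ a - b / (v + c) := by
  have had : 0 < a - δ := sub_pos.mpr hδ
  have hb : 0 < b := by simpa [had] using hpos
  have : b / (v + c) < a - δ :=
    calc b / (v + c) < b / (b / (a - δ)) := div_lt_div_of_pos_left hb hpos hv
      _ = a - δ := div_div_cancel₀ hb.ne'
  linarith

theorem lt_one_div_of_hasDerivAt_mul_sq {r f : ℝ → ℝ} {δ T : ℝ} (hδ : 0 < δ) (hr₀ : 0 < r 0)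
    (hr : ∀ t ∈ Icc 0 T, HasDerivAt r (f t * r t ^ 2) t) (hf : ∀ t ∈ Icc 0 T, δ ≤ f t) :
    T < 1 / (δ * r 0) := by
  rcases lt_or_ge T 0 with hT | hT
  · exact hT.trans_le (by positivity)
  have hmono : MonotoneOn r (Icc 0 T) :=
    (convex_Icc 0 T).monotoneOn_of_hasDerivAt_nonneg hr fun t ht =>
      mul_nonneg (hδ.le.trans (hf t (interior_subset ht))) (sq_nonneg _)
  have hrpos : ∀ t ∈ Icc 0 T, 0 < r t := fun t ht =>
    hr₀.trans_le (hmono (left_mem_Icc.mpr (ht.1.trans ht.2)) ht ht.1)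
  have hanti : AntitoneOn (fun t => (r t)⁻¹ + δ * t) (Icc 0 T) := by
    refine (convex_Icc 0 T).antitoneOn_of_hasDerivAt_nonpos
      (fun t ht => ((hr t ht).inv (hrpos t ht).ne').add ((hasDerivAt_id' t).const_mul δ))
      fun t ht => ?_
    have hrt := (hrpos t (interior_subset ht)).ne'
    rw [neg_div, mul_div_assoc, div_self (pow_ne_zero 2 hrt)]
    linarith [hf t (interior_subset ht)]
  have hend := hanti (left_mem_Icc.mpr hT) (right_mem_Icc.mpr hT) hT
  have hrT := hrpos T (right_mem_Icc.mpr hT)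
  simp only [mul_zero, add_zero] at hend
  rw [lt_div_iff₀ (by positivity)]
  nlinarith [inv_pos.mpr hrT, mul_inv_cancel₀ hr₀.ne']

theorem interference_blowup_general (ω₅ ω₈ ω₁₀ ω₁₁ ω₁₂ δ₁ v₀ r₀ M T : ℝ)
    (h5 : 0 < ω₅) (h8 : 0 < ω₈)
    (h12 : 0 < ω₁₂) (hδ : 0 < δ₁) (hδ10 : δ₁ < ω₁₀)
    (hM : M = ω₁₁ / (ω₁₀ - δ₁) - ω₁₂) (hMpos : 0 < M)
    (hv₀ : 0 < v₀) (hr₀ : 0 < r₀)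
    (hlarge : r₀ * Real.log (v₀ / M) > (ω₅ + 1 / ω₈) / δ₁)
    (hT : T > 1 / (δ₁ * r₀))
    (v v' r : ℝ → ℝ) (hv0 : v 0 = v₀) (hr0 : r 0 = r₀)
    (hvd : ∀ t ≥ (0:ℝ), HasDerivAt v (v' t) t)
    (hvineq : ∀ t ≥ (0:ℝ), v' t ≥ -(ω₅ + 1 / ω₈) * v t)
    (hrd : ∀ t ∈ Ico (0:ℝ) T,
      HasDerivAt r ((ω₁₀ - ω₁₁ / (v t + ω₁₂)) * (r t) ^ 2) t) :
    False := by
  set c := ω₅ + 1 / ω₈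
  have hc : 0 < c := by positivity
  have hstar : 1 / (δ₁ * r₀) < log (v₀ / M) / c := by
    rw [div_lt_div_iff₀ (by positivity) hc, one_mul]
    nlinarith [(div_lt_iff₀ hδ).mp hlarge]
  obtain ⟨t₂, ht₂, ht₂'⟩ := exists_between (lt_min hstar hT)
  have hct₂ : c * t₂ < log (v₀ / M) := by
    rw [mul_comm, ← lt_div_iff₀ hc]; exact ht₂'.trans_le (min_le_left _ _)
  have hvM : ∀ t ∈ Icc 0 t₂, M < v t := fun t ht =>
    calc M = v₀ * exp (-log (v₀ / M)) := by
          rw [exp_neg, exp_log (by positivity)]; field_simp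
      _ < v₀ * exp (-(c * t)) := by gcongr; nlinarith [ht.2]
      _ ≤ v t := hv0 ▸ mul_exp_neg_le_of_hasDerivAt_ge hvd hvineq t ht.1
  have hrT := lt_one_div_of_hasDerivAt_mul_sq (T := t₂) hδ (hr0 ▸ hr₀)
    (fun t ht => hrd t ⟨ht.1, ht.2.trans_lt (ht₂'.trans_le (min_le_right _ _))⟩)
    (fun t ht => le_sub_div_of_div_sub_lt hδ10 (by linarith) (by linarith [hvM t ht]))
  rw [hr0] at hrT
  linarith

/-- Blow-up theorem: if r₀ ln(v₀/M) > (ω₅ + 1/ω₈)/δ₁, there is no solution of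
the coupled system (v' ≥ -(ω₅+1/ω₈)v, r' = (ω₁₀ - ω₁₁/(v+ω₁₂)) r²) on any
interval [0,T) with T > 1/(δ₁ r₀); i.e. r blows up at some T* ≤ 1/(δ₁ r₀). -/
theorem interference_blowup (ω₅ ω₈ ω₁₀ ω₁₁ ω₁₂ δ₁ v₀ r₀ M T : ℝ)
    (h5 : 0 < ω₅) (h8 : 0 < ω₈) (h10 : 0 < ω₁₀) (h11 : 0 < ω₁₁)
    (h12 : 0 < ω₁₂) (hδ : 0 < δ₁) (hδ10 : δ₁ < ω₁₀)
    (hM : M = ω₁₁ / (ω₁₀ - δ₁) - ω₁₂) (hMpos : 0 < M)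
    (hv₀ : 0 < v₀) (hv₀M : M < v₀) (hr₀ : 0 < r₀)
    (hlarge : r₀ * Real.log (v₀ / M) > (ω₅ + 1 / ω₈) / δ₁)
    (hT : T > 1 / (δ₁ * r₀))
    (v v' r : ℝ → ℝ) (hv0 : v 0 = v₀) (hr0 : r 0 = r₀)
    (hvd : ∀ t ≥ (0:ℝ), HasDerivAt v (v' t) t)
    (hvineq : ∀ t ≥ (0:ℝ), v' t ≥ -(ω₅ + 1 / ω₈) * v t)
    (hrd : ∀ t ∈ Ico (0:ℝ) T,
      HasDerivAt r ((ω₁₀ - ω₁₁ / (v t + ω₁₂)) * (r t) ^ 2) t) :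
    False :=
  interference_blowup_general ω₅ ω₈ ω₁₀ ω₁₁ ω₁₂ δ₁ v₀ r₀ M T h5 h8 h12 hδ hδ10 hM hMpos hv₀ hr₀
    hlarge hT v v' r hv0 hr0 hvd hvineq hrd
end

section
/- Let ω₅, ω₈, ω₁₀, ω₁₁ > 0, v₀ > 0, r₀ > 0, and set a := ω₅ + 1/ω₈. Suppose there exists T₁ > 0 such that e^{a T₁} < v₀ a ((ω₁₀/ω₁₁) T₁ - 1/(ω₁₁ r₀)) + 1. If v(t) ≥ v₀ e^{-a t} for all t, then ψ(T₁) := 1/r₀ - ω₁₀ T₁ + ∫₀^{T₁} ω₁₁/(v(s)+ω₁₂) ds < 0, where ω₁₂ ≥ 0. -/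
open Real Set intervalIntegral

/-! The lower bound `v t ≥ v₀ e^{-a t}` gives `ω₁₁ / (v s + ω₁₂) ≤ (ω₁₁ / v₀) e^{a s}` pointwise,
so the integral in `ψ(T₁)` is at most `(ω₁₁ / (v₀ a)) (e^{a T₁} - 1)`. Since `a > 0`, the hypothesis on
`T₁` says exactly that this bound is smaller than `ω₁₀ T₁ - 1 / r₀`. -/

theorem integral_exp_mul {c : ℝ} (hc : c ≠ 0) (a b : ℝ) :
    ∫ x in a..b, exp (c * x) = (exp (c * b) - exp (c * a)) / c := by
  rw [integral_comp_mul_left exp hc, integral_exp, smul_eq_mul, inv_mul_eq_div]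

/-- Unlike `intervalIntegral.integral_mono_on`, the smaller function need not be integrable:
if it is not, its integral is `0`. -/
theorem intervalIntegral_mono_on_of_nonneg {f g : ℝ → ℝ} {a b : ℝ} (hab : a ≤ b)
    (hg : IntervalIntegrable g MeasureTheory.volume a b) (hf : ∀ x ∈ Ioc a b, 0 ≤ f x)
    (hfg : ∀ x ∈ Ioc a b, f x ≤ g x) :
    ∫ x in a..b, f x ≤ ∫ x in a..b, g x := by
  rw [integral_of_le hab, integral_of_le hab]
  exact MeasureTheory.integral_mono_of_nonneg
    (MeasureTheory.ae_restrict_of_forall_mem measurableSet_Ioc hf) hg.1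
    (MeasureTheory.ae_restrict_of_forall_mem measurableSet_Ioc hfg)

theorem div_le_div_mul_exp_of_mul_exp_neg_le {c v₀ a t w : ℝ} (hc : 0 ≤ c) (hv₀ : 0 < v₀)
    (hw : v₀ * exp (-a * t) ≤ w) :
    c / w ≤ c / v₀ * exp (a * t) :=
  calc c / w ≤ c / (v₀ * exp (-a * t)) := div_le_div_of_nonneg_left hc (by positivity) hw
    _ = c / v₀ * exp (a * t) := by rw [neg_mul, exp_neg]; field_simp

theorem integral_div_le_of_mul_exp_neg_le {w : ℝ → ℝ} {c v₀ a T : ℝ} (hc : 0 ≤ c)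
    (hv₀ : 0 < v₀) (ha : a ≠ 0) (hT : 0 ≤ T)
    (hw : ∀ t ∈ Ioc 0 T, v₀ * exp (-a * t) ≤ w t) :
    ∫ s in (0:ℝ)..T, c / w s ≤ c / (v₀ * a) * (exp (a * T) - 1) :=
  calc ∫ s in (0:ℝ)..T, c / w s ≤ ∫ s in (0:ℝ)..T, c / v₀ * exp (a * s) :=
        intervalIntegral_mono_on_of_nonneg hT ((by fun_prop : Continuous _).intervalIntegrable _ _)
          (fun t ht => div_nonneg hc ((by positivity : 0 ≤ v₀ * exp (-a * t)).trans (hw t ht)))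
          (fun t ht => div_le_div_mul_exp_of_mul_exp_neg_le hc hv₀ (hw t ht))
    _ = c / (v₀ * a) * (exp (a * T) - 1) := by
        rw [integral_const_mul, integral_exp_mul ha, mul_zero, exp_zero]
        field_simp

theorem psi_negative_general (ω₅ ω₈ ω₁₀ ω₁₁ ω₁₂ v₀ r₀ a T₁ : ℝ)
    (h5 : 0 < ω₅) (h8 : 0 < ω₈) (h11 : 0 < ω₁₁)
    (h12 : 0 ≤ ω₁₂) (hv₀ : 0 < v₀)
    (ha : a = ω₅ + 1 / ω₈) (hT₁ : 0 < T₁)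
    (hcond : Real.exp (a * T₁) <
      v₀ * a * ((ω₁₀ / ω₁₁) * T₁ - 1 / (ω₁₁ * r₀)) + 1)
    (v : ℝ → ℝ)
    (hv : ∀ t ≥ (0:ℝ), v t ≥ v₀ * Real.exp (-a * t)) :
    1 / r₀ - ω₁₀ * T₁ + (∫ s in (0:ℝ)..T₁, ω₁₁ / (v s + ω₁₂)) < 0 := by
  have ha₀ : 0 < a := ha ▸ by positivity
  have hintegral :
      ∫ s in (0:ℝ)..T₁, ω₁₁ / (v s + ω₁₂) ≤ ω₁₁ / (v₀ * a) * (exp (a * T₁) - 1) :=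
    integral_div_le_of_mul_exp_neg_le h11.le hv₀ ha₀.ne' hT₁.le
      fun t ht => (hv t ht.1.le).trans (le_add_of_nonneg_right h12)
  have hbound : ω₁₁ / (v₀ * a) * (exp (a * T₁) - 1) < ω₁₀ * T₁ - 1 / r₀ :=
    calc ω₁₁ / (v₀ * a) * (exp (a * T₁) - 1)
        < ω₁₁ / (v₀ * a) * (v₀ * a * ((ω₁₀ / ω₁₁) * T₁ - 1 / (ω₁₁ * r₀))) := by
          gcongr; linarith
      _ = ω₁₀ * T₁ - 1 / r₀ := by field_simp
  linarith

/-- Key inequality: if e^{aT₁} < v₀ a ((ω₁₀/ω₁₁)T₁ - 1/(ω₁₁ r₀)) + 1 with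
a = ω₅ + 1/ω₈, and v(t) ≥ v₀ e^{-a t}, then ψ(T₁) < 0. -/
theorem psi_negative (ω₅ ω₈ ω₁₀ ω₁₁ ω₁₂ v₀ r₀ a T₁ : ℝ)
    (h5 : 0 < ω₅) (h8 : 0 < ω₈) (h10 : 0 < ω₁₀) (h11 : 0 < ω₁₁)
    (h12 : 0 ≤ ω₁₂) (hv₀ : 0 < v₀) (hr₀ : 0 < r₀)
    (ha : a = ω₅ + 1 / ω₈) (hT₁ : 0 < T₁)
    (hcond : Real.exp (a * T₁) <
      v₀ * a * ((ω₁₀ / ω₁₁) * T₁ - 1 / (ω₁₁ * r₀)) + 1)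
    (v : ℝ → ℝ) (hvcont : Continuous v)
    (hv : ∀ t ≥ (0:ℝ), v t ≥ v₀ * Real.exp (-a * t)) :
    1 / r₀ - ω₁₀ * T₁ + (∫ s in (0:ℝ)..T₁, ω₁₁ / (v s + ω₁₂)) < 0 :=
  psi_negative_general ω₅ ω₈ ω₁₀ ω₁₁ ω₁₂ v₀ r₀ a T₁ h5 h8 h11 h12 hv₀ ha hT₁ hcond v hv
end
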